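/- arXiv:2311.05566 — 5 statements merged into one kernel-verified Lean document; each statement's English description precedes it below -/
import Mathlib

section
/- If a perfect coloring g of a finite graph is a refinement of a perfect coloring f of the same graph, then every eigenvalue of the quotient matrix of f is an eigenvalue of the quotient matrix of g. -/
open Finset

/-- The hypercube graph `Q n` on binary words of length `n`. -/
def cubeGraph (n : ℕ) : SimpleGraph (Fin n → ZMod 2) where
  Adj x y := hammingDist x y = 1
  symm := ⟨by intro x y h; rwa [hammingDist_comm]⟩
  loopless := ⟨by intro x h; simp [hammingDist_self] at h⟩

instance (n : ℕ) : DecidableRel (cubeGraph n).Adj := fun _ _ => Nat.decEq _ _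

/-- `f` is a perfect coloring of `G` with quotient matrix `S`. -/
def IsPerfectColoring {V K : Type*} [Fintype V] [DecidableEq K]
    (G : SimpleGraph V) [DecidableRel G.Adj] (f : V → K) (S : K → K → ℕ) : Prop :=
  ∀ v j, ((G.neighborFinset v).filter (fun w => f w = j)).card = S (f v) j

/-!
Since `g` refines `f`, the colors of `g` map onto those of `f` by some `π` with `π ∘ g = f`.
Counting the `f`-colored neighbors of a vertex through their `g`-colors gives
`Sf (π l) k = ∑_{π l' = k} Sg l l'`, so for every eigenvector `u` of `Sf` the pullback
`u ∘ π` is an eigenvector of `Sg` with the same eigenvalue; it is nonzero because `π` is onto.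
-/

open Matrix

theorem Function.FactorsThrough.comp_surjInv_comp {α β γ : Type*} {f : α → γ} {g : α → β}
    (h : f.FactorsThrough g) (hg : g.Surjective) : f ∘ Function.surjInv hg ∘ g = f :=
  funext fun a => h (Function.surjInv_eq hg (g a))

theorem IsPerfectColoring.apply_eq_sum_fiber {V K L : Type*} [Fintype V] [DecidableEq K]
    [Fintype L] [DecidableEq L] {G : SimpleGraph V} [DecidableRel G.Adj]
    {f : V → K} {g : V → L} {Sf : K → K → ℕ} {Sg : L → L → ℕ}
    (hf : IsPerfectColoring G f Sf) (hg : IsPerfectColoring G g Sg)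
    {π : L → K} (hπ : π ∘ g = f) (v : V) (k : K) :
    Sf (f v) k = ∑ l ∈ univ.filter (fun l => π l = k), Sg (g v) l := by
  have hπv : ∀ w, π (g w) = f w := congrFun hπ
  rw [← hf v k, card_eq_sum_card_fiberwise (f := g) (t := univ.filter (fun l => π l = k))]
  · refine sum_congr rfl fun l hl => ?_
    rw [← hg v l, filter_filter]
    refine congrArg card (filter_congr fun w _ => ?_)
    rw [← hπv w]
    exact ⟨And.right, fun hwl => ⟨hwl ▸ (mem_filter.mp hl).2, hwl⟩⟩
  · intro w hw
    simpa [hπv] using (mem_filter.mp hw).2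

theorem Matrix.mulVec_comp_of_apply_eq_sum_fiber {R K L : Type*} [CommRing R]
    [Fintype K] [DecidableEq K] [Fintype L]
    {A : Matrix K K R} {B : Matrix L L R} {π : L → K}
    (h : ∀ l k, A (π l) k = ∑ l' ∈ univ.filter (fun l' => π l' = k), B l l') (u : K → R) :
    B *ᵥ (u ∘ π) = (A *ᵥ u) ∘ π := by
  funext l
  simp only [mulVec, dotProduct, Function.comp_apply, h, sum_mul]
  rw [← sum_fiberwise univ π]
  refine sum_congr rfl fun k _ => sum_congr rfl fun l' hl' => ?_
  rw [(mem_filter.mp hl').2]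

theorem Module.End.HasEigenvalue.of_apply_eq_sum_fiber {R K L : Type*} [CommRing R]
    [Fintype K] [DecidableEq K] [Fintype L] [DecidableEq L]
    {A : Matrix K K R} {B : Matrix L L R} {π : L → K} (hπ : π.Surjective)
    (h : ∀ l k, A (π l) k = ∑ l' ∈ univ.filter (fun l' => π l' = k), B l l') {μ : R}
    (hμ : Module.End.HasEigenvalue (Matrix.toLin' A) μ) :
    Module.End.HasEigenvalue (Matrix.toLin' B) μ := by
  obtain ⟨u, hu⟩ := hμ.exists_hasEigenvector
  have hAu : A *ᵥ u = μ • u := hu.apply_eq_smul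
  refine Module.End.hasEigenvalue_of_hasEigenvector (x := u ∘ π) ⟨?_, ?_⟩
  · rw [Module.End.mem_eigenspace_iff, toLin'_apply, mulVec_comp_of_apply_eq_sum_fiber h, hAu]
    rfl
  · intro hzero
    exact hu.2 (funext fun k => by
      obtain ⟨l, rfl⟩ := hπ k
      exact congrFun hzero l)

/-- If a perfect coloring `g` refines a perfect coloring `f` of the same
finite graph, then every eigenvalue of the quotient matrix of `f` is an eigenvalue of
the quotient matrix of `g`. -/
theorem stmt4 {V K L : Type*} [Fintype V] [Fintype K] [DecidableEq K]
    [Fintype L] [DecidableEq L]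
    (G : SimpleGraph V) [DecidableRel G.Adj]
    (f : V → K) (hsurjf : Function.Surjective f)
    (g : V → L) (hsurjg : Function.Surjective g)
    (Sf : K → K → ℕ) (hf : IsPerfectColoring G f Sf)
    (Sg : L → L → ℕ) (hg : IsPerfectColoring G g Sg)
    (href : ∀ x y : V, f x ≠ f y → g x ≠ g y)
    (μ : ℝ)
    (hμ : Module.End.HasEigenvalue
      (Matrix.toLin' (fun i j => (Sf i j : ℝ) : Matrix K K ℝ)) μ) :
    Module.End.HasEigenvalue
      (Matrix.toLin' (fun i j => (Sg i j : ℝ) : Matrix L L ℝ)) μ := by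
  have hfg : f.FactorsThrough g := fun x y => not_imp_not.mp (href x y)
  set π := f ∘ Function.surjInv hsurjg
  have hπ : π ∘ g = f := hfg.comp_surjInv_comp hsurjg
  refine hμ.of_apply_eq_sum_fiber (Function.Surjective.of_comp (hπ ▸ hsurjf)) fun l k => ?_
  obtain ⟨v, rfl⟩ := hsurjg l
  rw [show π (g v) = f v from congrFun hπ v, hf.apply_eq_sum_fiber hg hπ v k]
  push_cast
  rfl
end

section
/- Let f : Z₂ⁿ → {0,1} be a non-constant perfect coloring of Qₙ (a 2-coloring) whose quotient matrix has second-largest eigenvalue θ = n − 2(t+1). Then f is t-correlation-immune: for any set of t coordinates and any fixed values on those coordinates, the number of ones of f on the resulting subcube of dimension n−t, divided by 2^{n−t}, equals the overall density of ones of f. -/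
/-!
The indicator `g` of the colour-1 class satisfies `A g = θ g + S₀₁` on `Qₙ`, where
`θ = S₁₁ - S₀₁`, which is `S₀₀ + S₁₁ - n` by the row sum `S₀₀ + S₀₁ = n` at a vertex of
colour 0.
The Walsh characters `χ_b` are eigenvectors of the symmetric adjacency matrix `A` with
eigenvalue `n - 2|b|` and, for `b ≠ ∅`, are orthogonal to the constants; hence
`⟨χ_b, g⟩ = 0` whenever `n - 2|b| ≠ θ`, in particular for `0 < |b| ≤ t`. The indicator of
a subcube with fixed coordinates `s` expands in the characters `χ_b`, `b ⊆ s`, so only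
`b = ∅` contributes to the count of ones in the subcube, which is therefore
`2^{-|s|}` times the total count.
-/

open Finset

open Matrix SimpleGraph

lemma Matrix.IsSymm.dotProduct_eq_zero_of_mulVec_eq {ι R : Type*} [Fintype ι] [CommRing R]
    [NoZeroDivisors R] {A : Matrix ι ι R} (hA : A.IsSymm) {u g w : ι → R} {μ θ : R}
    (hu : A *ᵥ u = μ • u) (hg : A *ᵥ g = θ • g + w) (hw : u ⬝ᵥ w = 0) (hμθ : μ ≠ θ) :
    u ⬝ᵥ g = 0 := by
  have h : μ * (u ⬝ᵥ g) = θ * (u ⬝ᵥ g) :=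
    calc μ * (u ⬝ᵥ g) = (A *ᵥ u) ⬝ᵥ g := by rw [hu, smul_dotProduct, smul_eq_mul]
      _ = u ⬝ᵥ (A *ᵥ g) := by rw [dotProduct_mulVec, ← mulVec_transpose, hA.eq]
      _ = θ * (u ⬝ᵥ g) := by rw [hg, dotProduct_add, hw, dotProduct_smul, add_zero, smul_eq_mul]
  have h' : (μ - θ) * (u ⬝ᵥ g) = 0 := by rw [sub_mul, h, sub_self]
  exact (mul_eq_zero.mp h').resolve_left (sub_ne_zero.mpr hμθ)

lemma zmod_two_eq_zero_or_one (a : ZMod 2) : a = 0 ∨ a = 1 := by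
  revert a
  decide

namespace IsPerfectColoring

variable {V K : Type*} [Fintype V] [DecidableEq K] {G : SimpleGraph V} [DecidableRel G.Adj]
  {f : V → K} {S : K → K → ℕ}

lemma sum_eq_degree [Fintype K] (h : IsPerfectColoring G f S) (v : V) :
    ∑ j, S (f v) j = G.degree v := by
  rw [← card_neighborFinset_eq_degree, card_eq_sum_card_fiberwise (f := f) (t := univ)
    fun _ _ => mem_univ _]
  exact sum_congr rfl fun j _ => (h v j).symm

lemma adjMatrix_mulVec_indicator {R : Type*} [NonAssocSemiring R] (h : IsPerfectColoring G f S)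
    (j : K) : G.adjMatrix R *ᵥ (fun v => if f v = j then 1 else 0) = fun v => (S (f v) j : R) := by
  ext v
  rw [adjMatrix_mulVec_apply, sum_boole, h v j]

lemma add_eq_degree {f : V → ZMod 2} {S : ZMod 2 → ZMod 2 → ℕ} (h : IsPerfectColoring G f S)
    (v : V) : S (f v) 0 + S (f v) 1 = G.degree v :=
  (Fin.sum_univ_two _).symm.trans (h.sum_eq_degree v)

lemma adjMatrix_mulVec_indicator_one {f : V → ZMod 2} {S : ZMod 2 → ZMod 2 → ℕ}
    (h : IsPerfectColoring G f S) :
    G.adjMatrix ℚ *ᵥ (fun v => if f v = 1 then 1 else 0)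
      = ((S 1 1 : ℚ) - S 0 1) • (fun v => if f v = 1 then 1 else 0) + fun _ => (S 0 1 : ℚ) := by
  rw [h.adjMatrix_mulVec_indicator]
  ext v
  rcases zmod_two_eq_zero_or_one (f v) with hv | hv <;> simp [hv]

end IsPerfectColoring

lemma hammingNorm_eq_one_iff {ι : Type*} [Fintype ι] [DecidableEq ι] {d : ι → ZMod 2} :
    hammingNorm d = 1 ↔ ∃ i, d = Pi.single i 1 := by
  have hne : ∀ a : ZMod 2, a ≠ 0 ↔ a = 1 := by decide
  simp only [hammingNorm, card_eq_one, Finset.ext_iff, mem_filter, mem_univ, true_and,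
    mem_singleton, hne, funext_iff, Pi.single_apply]
  refine exists_congr fun i => forall_congr' fun j => ?_
  split_ifs <;> rcases zmod_two_eq_zero_or_one (d j) with h | h <;> simp_all

section

variable {n : ℕ}

def walsh (b : Finset (Fin n)) (x : Fin n → ZMod 2) : ℚ :=
  ∏ i ∈ b, (-1) ^ (x i).val

lemma neg_one_pow_val_add (u v : ZMod 2) :
    (-1 : ℚ) ^ (u + v).val = (-1) ^ u.val * (-1) ^ v.val := by
  rw [ZMod.val_add, ← pow_add]
  exact (neg_one_pow_eq_pow_mod_two _).symm

lemma walsh_add (b : Finset (Fin n)) (x y : Fin n → ZMod 2) :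
    walsh b (x + y) = walsh b x * walsh b y := by
  simp only [walsh, Pi.add_apply, neg_one_pow_val_add, prod_mul_distrib]

lemma walsh_single (b : Finset (Fin n)) (i : Fin n) :
    walsh b (Pi.single i 1) = if i ∈ b then -1 else 1 := by
  have h : ∀ j, (-1 : ℚ) ^ (Pi.single (M := fun _ => ZMod 2) i 1 j).val
      = if j = i then -1 else 1 := by
    intro j
    rw [Pi.single_apply]
    split_ifs <;> simp [ZMod.val_one]
  simp only [walsh, h, prod_ite_eq']

lemma sum_walsh_single (b : Finset (Fin n)) :
    ∑ i, walsh b (Pi.single i 1) = n - 2 * #b := by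
  have h : ∀ i, walsh b (Pi.single i 1) = 1 - 2 * if i ∈ b then 1 else 0 := by
    intro i
    rw [walsh_single]
    split_ifs <;> norm_num
  rw [sum_congr rfl fun i _ => h i, sum_sub_distrib, ← mul_sum, sum_boole]
  simp

lemma sum_walsh_eq_zero {b : Finset (Fin n)} (hb : b.Nonempty) : ∑ x, walsh b x = 0 := by
  obtain ⟨i, hi⟩ := hb
  have h := Equiv.sum_comp (Equiv.addRight (Pi.single i 1 : Fin n → ZMod 2)) (walsh b)
  simp only [Equiv.coe_addRight, walsh_add, walsh_single, if_pos hi, mul_neg_one,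
    sum_neg_distrib] at h
  linarith

lemma cubeGraph_adj_iff {x y : Fin n → ZMod 2} :
    (cubeGraph n).Adj x y ↔ ∃ i, y = x + Pi.single i 1 := by
  change hammingDist x y = 1 ↔ _
  simp only [hammingDist_eq_hammingNorm, hammingNorm_eq_one_iff, neg_add_eq_iff_eq_add]

lemma add_single_injective (x : Fin n → ZMod 2) :
    Function.Injective fun i => x + Pi.single i 1 := by
  intro i j h
  by_contra hij
  simpa [Pi.single_apply, hij] using congrFun h i

lemma neighborFinset_cubeGraph (x : Fin n → ZMod 2) :
    (cubeGraph n).neighborFinset x = univ.image fun i => x + Pi.single i 1 := by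
  ext y
  simp [cubeGraph_adj_iff, eq_comm]

lemma sum_neighborFinset_cubeGraph {M : Type*} [AddCommMonoid M] (x : Fin n → ZMod 2)
    (F : (Fin n → ZMod 2) → M) :
    ∑ y ∈ (cubeGraph n).neighborFinset x, F y = ∑ i, F (x + Pi.single i 1) := by
  rw [neighborFinset_cubeGraph, sum_image (add_single_injective x).injOn]

lemma cubeGraph_degree (x : Fin n → ZMod 2) : (cubeGraph n).degree x = n := by
  rw [← card_neighborFinset_eq_degree, neighborFinset_cubeGraph,
    card_image_of_injective _ (add_single_injective x), card_univ, Fintype.card_fin]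

lemma adjMatrix_cubeGraph_mulVec_walsh (b : Finset (Fin n)) :
    (cubeGraph n).adjMatrix ℚ *ᵥ walsh b = ((n : ℚ) - 2 * #b) • walsh b := by
  ext x
  rw [adjMatrix_mulVec_apply, sum_neighborFinset_cubeGraph]
  simp only [walsh_add, ← mul_sum, sum_walsh_single, Pi.smul_apply, smul_eq_mul, mul_comm]

lemma walsh_dotProduct_eq_zero {g : (Fin n → ZMod 2) → ℚ} {θ c : ℚ}
    (hg : (cubeGraph n).adjMatrix ℚ *ᵥ g = θ • g + fun _ => c) {b : Finset (Fin n)}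
    (hb : b.Nonempty) (hθ : (n : ℚ) - 2 * #b ≠ θ) : walsh b ⬝ᵥ g = 0 := by
  refine (isSymm_adjMatrix _).dotProduct_eq_zero_of_mulVec_eq
    (adjMatrix_cubeGraph_mulVec_walsh b) hg ?_ hθ
  simp [dotProduct, ← sum_mul, sum_walsh_eq_zero hb]

def subcube (s : Finset (Fin n)) (z : Fin n → ZMod 2) : Finset (Fin n → ZMod 2) :=
  univ.filter fun x => ∀ i ∈ s, x i = z i

lemma boole_eq_eq_half (u v : ZMod 2) :
    (if u = v then 1 else 0 : ℚ) = (1 + (-1) ^ u.val * (-1) ^ v.val) / 2 := by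
  rcases zmod_two_eq_zero_or_one u with rfl | rfl <;>
    rcases zmod_two_eq_zero_or_one v with rfl | rfl <;> norm_num [ZMod.val_one]

lemma prod_boole_eq_sum_walsh (s : Finset (Fin n)) (x z : Fin n → ZMod 2) :
    ∏ i ∈ s, (if x i = z i then 1 else 0 : ℚ)
      = (∑ b ∈ s.powerset, walsh b x * walsh b z) / 2 ^ #s := by
  simp only [boole_eq_eq_half, prod_div_distrib, prod_const, prod_one_add, walsh,
    prod_mul_distrib]

lemma sum_subcube (s : Finset (Fin n)) (z : Fin n → ZMod 2) (g : (Fin n → ZMod 2) → ℚ) :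
    ∑ x ∈ subcube s z, g x = (∑ b ∈ s.powerset, walsh b z * (walsh b ⬝ᵥ g)) / 2 ^ #s := by
  calc ∑ x ∈ subcube s z, g x
      = ∑ x, (∏ i ∈ s, if x i = z i then 1 else 0 : ℚ) * g x := by
        simp only [subcube, sum_filter, prod_ite_zero, prod_const_one, boole_mul]
    _ = (∑ x, ∑ b ∈ s.powerset, walsh b z * (walsh b x * g x)) / 2 ^ #s := by
        simp only [prod_boole_eq_sum_walsh, div_mul_eq_mul_div, sum_div, sum_mul]
        exact sum_congr rfl fun x _ => sum_congr rfl fun b _ => by ring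
    _ = (∑ b ∈ s.powerset, walsh b z * (walsh b ⬝ᵥ g)) / 2 ^ #s := by
        simp only [sum_comm (s := univ), dotProduct, mul_sum]

lemma sum_subcube_of_walsh_dotProduct_eq_zero {s : Finset (Fin n)} (z : Fin n → ZMod 2)
    {g : (Fin n → ZMod 2) → ℚ} (hg : ∀ b ⊆ s, b.Nonempty → walsh b ⬝ᵥ g = 0) :
    ∑ x ∈ subcube s z, g x = (∑ x, g x) / 2 ^ #s := by
  rw [sum_subcube, sum_eq_single_of_mem ∅ (empty_mem_powerset s)]
  · simp [walsh, dotProduct]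
  · intro b hb hne
    rw [hg b (mem_powerset.mp hb) (nonempty_iff_ne_empty.mpr hne), mul_zero]

end

/-- A non-constant perfect 2-coloring of `Qₙ` whose quotient matrix has
second-largest eigenvalue `θ = n − 2(t+1)` (for a 2×2 quotient matrix with row sums
`n`, the non-principal eigenvalue is `S₀₀ + S₁₁ − n`) is `t`-correlation-immune. -/
theorem stmt7 (n t : ℕ) (f : (Fin n → ZMod 2) → ZMod 2)
    (S : ZMod 2 → ZMod 2 → ℕ)
    (hperf : IsPerfectColoring (cubeGraph n) f S)
    (hnc : ∃ x y, f x ≠ f y)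
    (hθ : (S 0 0 : ℤ) + S 1 1 - n = (n : ℤ) - 2 * ((t : ℤ) + 1)) :
    ∀ s : Finset (Fin n), s.card = t → ∀ z : Fin n → ZMod 2,
      ((univ.filter (fun x : Fin n → ZMod 2 => (∀ i ∈ s, x i = z i) ∧ f x = 1)).card : ℚ)
          / 2 ^ (n - t)
        = ((univ.filter (fun x : Fin n → ZMod 2 => f x = 1)).card : ℚ) / 2 ^ n := by
  intro s hs z
  obtain ⟨v₀, hv₀⟩ : ∃ v, f v = 0 := by
    obtain ⟨x, y, hxy⟩ := hnc
    rcases zmod_two_eq_zero_or_one (f x) with hx | hx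
    · exact ⟨x, hx⟩
    · exact ⟨y, (zmod_two_eq_zero_or_one _).resolve_right fun hy => hxy (hx.trans hy.symm)⟩
  have hrow : (S 0 0 : ℚ) + S 0 1 = n := by
    have h := hperf.add_eq_degree v₀
    rw [hv₀, cubeGraph_degree] at h
    exact_mod_cast h
  have hθ' : (S 0 0 : ℚ) + S 1 1 - n = n - 2 * (t + 1) := by exact_mod_cast hθ
  have hfourier : ∀ b ⊆ s, b.Nonempty → walsh b ⬝ᵥ (fun x => if f x = 1 then 1 else 0) = 0 := by
    intro b hbs hb
    have hbt : (#b : ℚ) ≤ t := by exact_mod_cast hs ▸ card_le_card hbs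
    refine walsh_dotProduct_eq_zero hperf.adjMatrix_mulVec_indicator_one hb fun h => ?_
    linarith
  have htn : t ≤ n := hs ▸ (card_le_univ s).trans_eq (Fintype.card_fin n)
  have hcount : ((univ.filter fun x => (∀ i ∈ s, x i = z i) ∧ f x = 1).card : ℚ)
      = ∑ x ∈ subcube s z, if f x = 1 then 1 else 0 := by
    simp only [subcube, sum_boole, filter_filter]
  rw [hcount, sum_subcube_of_walsh_dotProduct_eq_zero z hfourier, hs, sum_boole, div_div,
    ← pow_add, Nat.add_sub_cancel' htn]
end

section
/- Let f : Z₂ⁿ → {0,1} be t-correlation-immune with density of ones ρ ∉ {0, 1/2, 1}. Then t ≤ 2n/3 − 1. -/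
open Finset

/-!
Put `g = 𝟙[f = 1] - ρ` and let `ĝ` be its Walsh–Fourier transform. Correlation immunity of
order `t` makes `ĝ y` vanish whenever `y` has weight at most `t` (for `y = 0` because `g` has
mean zero). Fourier inversion gives `4ⁿ ∑ₓ g(x)³ = ∑_{y,z} ĝ(y) ĝ(z) ĝ(y + z)`, and since
`|y| + |z| + |y + z| ≤ 2n`, if `2n < 3(t + 1)` one of the three weights is at most `t`, so the
right-hand side vanishes. But `∑ₓ g(x)³ = 2ⁿ ρ(1 - ρ)(1 - 2ρ)`, which is nonzero.
-/

section Density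

variable {α R : Type*} [Fintype α] [CommRing R] {P : α → Prop} [DecidablePred P] {ρ : R}

lemma sum_indicator_sub_eq_zero (hρ : (#{x | P x} : R) = ρ * Fintype.card α) :
    ∑ x, ((if P x then 1 else 0) - ρ) = 0 := by
  simp [sum_sub_distrib, sum_boole, hρ, mul_comm]

lemma sum_indicator_sub_pow_three (hρ : (#{x | P x} : R) = ρ * Fintype.card α) :
    ∑ x, ((if P x then 1 else 0) - ρ) ^ 3 = Fintype.card α * (ρ * (1 - ρ) * (1 - 2 * ρ)) := by
  have hnot : (#{x | ¬P x} : R) = Fintype.card α - #{x | P x} := by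
    rw [eq_sub_iff_add_eq, ← Nat.cast_add, add_comm, card_filter_add_card_filter_not, card_univ]
  have hpoint (x : α) :
      ((if P x then 1 else 0) - ρ) ^ 3 = if P x then (1 - ρ) ^ 3 else (-ρ) ^ 3 := by
    split_ifs <;> ring
  rw [sum_congr rfl fun x _ => hpoint x, sum_ite, sum_const, sum_const, nsmul_eq_mul,
    nsmul_eq_mul, hnot, hρ]
  ring

end Density

namespace Walsh

variable {ι : Type*} [Fintype ι] {R : Type*} [CommRing R]

def walsh (y x : ι → ZMod 2) : R := (-1) ^ (y ⬝ᵥ x).val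

lemma neg_one_pow_val_add (a b : ZMod 2) :
    (-1 : R) ^ (a + b).val = (-1) ^ a.val * (-1) ^ b.val := by
  rw [ZMod.val_add, ← neg_one_pow_eq_pow_mod_two, pow_add]

lemma walsh_comm (y x : ι → ZMod 2) : walsh (R := R) y x = walsh x y := by
  rw [walsh, walsh, dotProduct_comm]

lemma walsh_add_right (y x x' : ι → ZMod 2) :
    walsh (R := R) y (x + x') = walsh y x * walsh y x' := by
  rw [walsh, dotProduct_add, neg_one_pow_val_add, walsh, walsh]

lemma walsh_add_left (y y' x : ι → ZMod 2) :
    walsh (R := R) (y + y') x = walsh y x * walsh y' x := by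
  rw [walsh_comm, walsh_add_right, walsh_comm x, walsh_comm x]

lemma walsh_zero_left (x : ι → ZMod 2) : walsh (R := R) 0 x = 1 := by
  simp [walsh]

variable [DecidableEq ι]

lemma walsh_add_single_of_ne_zero {y : ι → ZMod 2} {i : ι} (hi : y i ≠ 0) (x : ι → ZMod 2) :
    walsh (R := R) y (x + Pi.single i 1) = -walsh y x := by
  have hi : y i = 1 := Fin.eq_one_of_ne_zero (y i) hi
  rw [walsh_add_right, mul_comm]
  simp [walsh, dotProduct_single, hi, show (1 : ZMod 2).val = 1 from rfl]

lemma sum_walsh_eq_zero_of_add_single_mem {A : Finset (ι → ZMod 2)} {y : ι → ZMod 2} {i : ι}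
    (hi : y i ≠ 0) (hA : ∀ x ∈ A, x + Pi.single i 1 ∈ A) : ∑ x ∈ A, walsh (R := R) y x = 0 := by
  refine sum_involution (fun x _ => x + Pi.single i 1) (fun x _ => ?_) (fun x _ _ => ?_) hA
    (fun x _ => ?_)
  · rw [walsh_add_single_of_ne_zero hi, add_neg_cancel]
  · simp
  · rw [add_assoc, ZModModule.add_self, add_zero]

lemma sum_walsh (y : ι → ZMod 2) :
    ∑ x, walsh (R := R) y x = if y = 0 then 2 ^ Fintype.card ι else 0 := by
  split_ifs with hy
  · simp [hy, walsh_zero_left]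
  · obtain ⟨i, hi⟩ := Function.ne_iff.mp hy
    exact sum_walsh_eq_zero_of_add_single_mem hi fun x _ => mem_univ _

def walshCoeff (g : (ι → ZMod 2) → R) (y : ι → ZMod 2) : R := ∑ x, g x * walsh y x

lemma sum_walshCoeff_mul_walsh (g : (ι → ZMod 2) → R) (x : ι → ZMod 2) :
    ∑ y, walshCoeff g y * walsh y x = 2 ^ Fintype.card ι * g x := by
  calc ∑ y, walshCoeff g y * walsh y x = ∑ x', g x' * ∑ y, walsh (x' + x) y := by
        simp only [walshCoeff, sum_mul, mul_sum, ← walsh_comm _ (_ + x), walsh_add_right, mul_assoc]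
        exact sum_comm
    _ = 2 ^ Fintype.card ι * g x := by
        simp [sum_walsh, ← ZModModule.sub_eq_add, sub_eq_zero, mul_comm]

lemma pow_three_mul_sum_pow_three_eq (g : (ι → ZMod 2) → R) :
    (2 ^ Fintype.card ι) ^ 3 * ∑ x, g x ^ 3 =
      2 ^ Fintype.card ι * ∑ y, ∑ z, walshCoeff g y * walshCoeff g z * walshCoeff g (y + z) := by
  have hsq (x : ι → ZMod 2) : (2 ^ Fintype.card ι * g x) * (2 ^ Fintype.card ι * g x) =
      ∑ y, ∑ z, walshCoeff g y * walshCoeff g z * walsh (y + z) x := by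
    simp only [← sum_walshCoeff_mul_walsh, sum_mul_sum, walsh_add_left]
    exact sum_congr rfl fun y _ => sum_congr rfl fun z _ => by ring
  calc (2 ^ Fintype.card ι) ^ 3 * ∑ x, g x ^ 3
      = 2 ^ Fintype.card ι *
          ∑ x, (2 ^ Fintype.card ι * g x) * (2 ^ Fintype.card ι * g x) * g x := by
        simp only [mul_sum]
        exact sum_congr rfl fun x _ => by ring
    _ = 2 ^ Fintype.card ι * ∑ y, ∑ z, walshCoeff g y * walshCoeff g z * walshCoeff g (y + z) := by
        simp only [hsq, sum_mul]
        rw [sum_comm]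
        refine congrArg _ (sum_congr rfl fun y _ => ?_)
        rw [sum_comm]
        refine sum_congr rfl fun z _ => ?_
        rw [show walshCoeff g (y + z) = ∑ x, g x * walsh (y + z) x from rfl, mul_sum]
        exact sum_congr rfl fun x _ => by ring

omit [DecidableEq ι] in
lemma hammingNorm_add_hammingNorm_add_hammingNorm_add_le (y z : ι → ZMod 2) :
    hammingNorm y + hammingNorm z + hammingNorm (y + z) ≤ 2 * Fintype.card ι := by
  have hcoord : ∀ a b : ZMod 2,
      (if a ≠ 0 then 1 else 0) + (if b ≠ 0 then 1 else 0) + (if a + b ≠ 0 then 1 else 0) ≤ 2 := by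
    decide
  simp only [hammingNorm, card_filter, ← sum_add_distrib, Pi.add_apply]
  calc _ ≤ ∑ _ : ι, 2 := sum_le_sum fun i _ => hcoord (y i) (z i)
    _ = 2 * Fintype.card ι := by simp [mul_comm]

theorem sum_pow_three_eq_zero_of_walshCoeff_eq_zero [IsDomain R] [CharZero R]
    {g : (ι → ZMod 2) → R} {t : ℕ} (hdim : 2 * Fintype.card ι < 3 * (t + 1))
    (hg : ∀ y, hammingNorm y ≤ t → walshCoeff g y = 0) : ∑ x, g x ^ 3 = 0 := by
  have hterm (y z : ι → ZMod 2) : walshCoeff g y * walshCoeff g z * walshCoeff g (y + z) = 0 := by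
    have := hammingNorm_add_hammingNorm_add_hammingNorm_add_le y z
    obtain h | h | h : hammingNorm y ≤ t ∨ hammingNorm z ≤ t ∨ hammingNorm (y + z) ≤ t := by omega
    all_goals simp [hg _ h]
  have h := pow_three_mul_sum_pow_three_eq g
  simp only [hterm, sum_const_zero, mul_zero] at h
  exact (mul_eq_zero.mp h).resolve_left (pow_ne_zero _ (pow_ne_zero _ two_ne_zero))

/-- Count form of the paper's condition that every subcube of codimension `t` has the global
density of `P`. -/
def IsCorrelationImmune (t : ℕ) (P : (ι → ZMod 2) → Prop) [DecidablePred P] : Prop :=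
  ∀ s : Finset ι, #s = t → ∀ z w : ι → ZMod 2,
    #{x | (∀ i ∈ s, x i = z i) ∧ P x} = #{x | (∀ i ∈ s, x i = w i) ∧ P x}

/-- `walsh y` is constant on the fibres of the projection `proj` onto the coordinates in `s`,
each fibre meets `P` equally often, and the Walsh sum over the image of `proj` vanishes. -/
theorem sum_walsh_filter_eq_zero {P : (ι → ZMod 2) → Prop} [DecidablePred P] {s : Finset ι}
    (hP : ∀ z w : ι → ZMod 2,
      #{x | (∀ i ∈ s, x i = z i) ∧ P x} = #{x | (∀ i ∈ s, x i = w i) ∧ P x})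
    {y : ι → ZMod 2} (hy : y ≠ 0) (hys : ∀ i ∉ s, y i = 0) :
    ∑ x with P x, walsh (R := R) y x = 0 := by
  set proj : (ι → ZMod 2) → ι → ZMod 2 := fun x => s.piecewise x 0
  set B : Finset (ι → ZMod 2) := {z | ∀ i ∉ s, z i = 0}
  have hproj_mem : ∀ x ∈ ({x | P x} : Finset _), proj x ∈ B := fun x _ => by
    simp +contextual [proj, B]
  have hwalsh_proj (x : ι → ZMod 2) : walsh (R := R) y (proj x) = walsh y x := by
    refine congrArg (fun a : ZMod 2 => (-1 : R) ^ a.val) (sum_congr rfl fun i _ => ?_)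
    by_cases hi : i ∈ s <;> simp [proj, hi, hys]
  have hfiber : ∀ z ∈ B, {x ∈ ({x | P x} : Finset _) | proj x = z} =
      ({x | (∀ i ∈ s, x i = z i) ∧ P x} : Finset _) := by
    intro z hz
    simp only [B, mem_filter, mem_univ, true_and] at hz
    ext x
    simp only [mem_filter, mem_univ, true_and, funext_iff]
    constructor
    · rintro ⟨hPx, hx⟩
      exact ⟨fun i hi => by simpa [proj, hi] using hx i, hPx⟩
    · rintro ⟨hx, hPx⟩
      refine ⟨hPx, fun i => ?_⟩
      by_cases hi : i ∈ s <;> simp [proj, hi, hx, hz]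
  obtain ⟨i, hi⟩ := Function.ne_iff.mp hy
  have his : i ∈ s := by_contra fun h => hi (hys i h)
  rw [← sum_fiberwise_of_maps_to hproj_mem]
  calc ∑ z ∈ B, ∑ x ∈ ({x | P x} : Finset _) with proj x = z, walsh (R := R) y x
      = ∑ z ∈ B, (#{x | (∀ i ∈ s, x i = (0 : ι → ZMod 2) i) ∧ P x} : R) * walsh y z := by
        refine sum_congr rfl fun z hz => ?_
        rw [sum_congr rfl fun x hx => (hwalsh_proj x).symm.trans (by rw [(mem_filter.mp hx).2]),
          sum_const, hfiber z hz, hP z 0, nsmul_eq_mul]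
    _ = 0 := by
        rw [← mul_sum, sum_walsh_eq_zero_of_add_single_mem hi, mul_zero]
        intro z hz
        simp only [B, mem_filter, mem_univ, true_and] at hz ⊢
        intro j hj
        simp [hz j hj, ne_of_mem_of_not_mem his hj |>.symm]

theorem walshCoeff_indicator_sub_eq_zero {P : (ι → ZMod 2) → Prop} [DecidablePred P] {t : ℕ}
    (hP : IsCorrelationImmune t P) (ht : t ≤ Fintype.card ι) {ρ : R}
    (hρ : (#{x | P x} : R) = ρ * Fintype.card (ι → ZMod 2)) {y : ι → ZMod 2}
    (hy : hammingNorm y ≤ t) : walshCoeff (fun x => (if P x then 1 else 0) - ρ) y = 0 := by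
  by_cases hy0 : y = 0
  · simpa [hy0, walshCoeff, walsh_zero_left] using sum_indicator_sub_eq_zero hρ
  obtain ⟨s, hsupp, hs⟩ := exists_superset_card_eq hy ht
  have hys : ∀ i ∉ s, y i = 0 := fun i hi => by_contra fun h => hi (hsupp (by simpa using h))
  simp only [walshCoeff, sub_mul, sum_sub_distrib, ite_mul, one_mul, zero_mul, ← sum_filter,
    ← mul_sum, sum_walsh, if_neg hy0, sum_walsh_filter_eq_zero (hP s hs) hy0 hys, mul_zero,
    sub_zero]

end Walsh

open Walsh in
/-- Fon-Der-Flaass bound: a `t`-correlation-immune Boolean function with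
density of ones `ρ ∉ {0, 1/2, 1}` satisfies `t ≤ 2n/3 − 1`. -/
theorem stmt8 (n t : ℕ) (ht : t ≤ n) (f : (Fin n → ZMod 2) → ZMod 2)
    (hCI : ∀ s : Finset (Fin n), s.card = t → ∀ z : Fin n → ZMod 2,
      ((univ.filter (fun x : Fin n → ZMod 2 => (∀ i ∈ s, x i = z i) ∧ f x = 1)).card : ℚ)
          / 2 ^ (n - t)
        = ((univ.filter (fun x : Fin n → ZMod 2 => f x = 1)).card : ℚ) / 2 ^ n)
    (hρ0 : ((univ.filter (fun x : Fin n → ZMod 2 => f x = 1)).card : ℚ) / 2 ^ n ≠ 0)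
    (hρh : ((univ.filter (fun x : Fin n → ZMod 2 => f x = 1)).card : ℚ) / 2 ^ n ≠ 1 / 2)
    (hρ1 : ((univ.filter (fun x : Fin n → ZMod 2 => f x = 1)).card : ℚ) / 2 ^ n ≠ 1) :
    (t : ℚ) ≤ 2 * n / 3 - 1 := by
  by_contra hlt
  have hdim : 2 * Fintype.card (Fin n) < 3 * (t + 1) := by
    rw [Fintype.card_fin]
    exact_mod_cast (by linarith : (2 * n : ℚ) < 3 * (t + 1))
  set ρ : ℚ := (#{x | f x = 1} : ℚ) / 2 ^ n
  have hρ : (#{x | f x = 1} : ℚ) = ρ * Fintype.card (Fin n → ZMod 2) := by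
    simp [ρ]
  have hImmune : IsCorrelationImmune t (fun x : Fin n → ZMod 2 => f x = 1) := fun s hs z w => by
    have h := (hCI s hs z).trans (hCI s hs w).symm
    rw [div_left_inj' (by positivity), Nat.cast_inj] at h
    convert h
  have hcube := sum_pow_three_eq_zero_of_walshCoeff_eq_zero hdim fun y hy =>
    walshCoeff_indicator_sub_eq_zero hImmune (by simpa using ht) hρ hy
  rw [sum_indicator_sub_pow_three hρ] at hcube
  have h12 : 1 - 2 * ρ ≠ 0 := fun h => hρh (by linarith)
  exact mul_ne_zero (by positivity)
    (mul_ne_zero (mul_ne_zero hρ0 (sub_ne_zero.mpr (Ne.symm hρ1))) h12) hcube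
end

section
/- Let f be a perfect k-coloring of Q_{n−1} with quotient matrix S. Define g on Qₙ by g(x₀,…,x_{n−2},x_{n−1}) = (x_{n−1}, f(x₀,…,x_{n−2})). Then g is a perfect 2k-coloring of Qₙ with quotient matrix T = [[S, Id],[Id, S]] (block form). Moreover, every eigenvalue λ of S gives rise to eigenvalues λ+1 and λ−1 of T: if v is a λ-eigenvector of S, then (v,v) is a (λ+1)-eigenvector and (v,−v) is a (λ−1)-eigenvector of T. -/
open Finset

/-!
Splitting off the last coordinate identifies `Q (m + 1)` with the box product `K₂ □ Q m`, and `g`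
becomes the product of the identity colouring of `K₂`, whose quotient matrix is the adjacency
matrix `J = [[0, 1], [1, 0]]`, with `f`. A product colouring of a box product is perfect with the
Kronecker sum `J ⊗ 1 + 1 ⊗ S` as quotient matrix. A Kronecker sum has the tensor products of
eigenvectors as eigenvectors, with the eigenvalues added, and `J` has the eigenvectors `(1, 1)` and
`(1, -1)` for `1` and `-1`.
-/

open scoped Kronecker
open Matrix SimpleGraph

theorem hammingDist_eq_hammingDist_init_add {n : ℕ} {β : Type*} [DecidableEq β]
    (x y : Fin (n + 1) → β) :
    hammingDist x y = hammingDist (Fin.init x) (Fin.init y)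
      + if x (Fin.last n) = y (Fin.last n) then 0 else 1 := by
  rw [hammingDist, hammingDist, card_filter, card_filter, Fin.sum_univ_castSucc]
  simp only [ne_eq, ite_not]
  rfl

def cubeGraphSuccIso (m : ℕ) : cubeGraph (m + 1) ≃g (⊤ : SimpleGraph (ZMod 2)) □ cubeGraph m where
  toEquiv := (Fin.snocEquiv fun _ => ZMod 2).symm
  map_rel_iff' {x y} := by
    simp only [boxProd_adj, top_adj, Fin.snocEquiv_symm_apply]
    change _ ↔ hammingDist x y = 1
    rw [hammingDist_eq_hammingDist_init_add, ← hammingDist_eq_zero, cubeGraph]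
    split_ifs <;> simp_all

section PerfectColoring

variable {V W K L : Type*} [Fintype V] [Fintype W] [DecidableEq K] [DecidableEq L]

theorem IsPerfectColoring.comp_iso {G : SimpleGraph V} {G' : SimpleGraph W}
    [DecidableRel G.Adj] [DecidableRel G'.Adj] {f : V → K} {S : K → K → ℕ}
    (hf : IsPerfectColoring G f S) (e : G' ≃g G) : IsPerfectColoring G' (f ∘ e) S := by
  intro v j
  change _ = S (f (e v)) j
  rw [← hf (e v) j]
  refine card_nbij' e e.symm ?_ ?_ (fun _ _ => e.symm_apply_apply _)
    (fun _ _ => e.apply_symm_apply _)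
  · intro w hw
    simpa [e.map_adj_iff] using hw
  · intro w hw
    simpa [← e.map_adj_iff] using hw

theorem isPerfectColoring_id_adjMatrix [DecidableEq V] (G : SimpleGraph V) [DecidableRel G.Adj] :
    IsPerfectColoring G id (G.adjMatrix ℕ) := by
  intro v j
  simp [filter_eq', adjMatrix_apply, apply_ite card]

theorem IsPerfectColoring.boxProd {G : SimpleGraph V} {H : SimpleGraph W}
    [DecidableRel G.Adj] [DecidableRel H.Adj] [DecidableRel (G □ H).Adj]
    {g : V → L} {f : W → K} {T : Matrix L L ℕ} {S : Matrix K K ℕ}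
    (hg : IsPerfectColoring G g T) (hf : IsPerfectColoring H f S) :
    IsPerfectColoring (G □ H) (fun x => (g x.1, f x.2)) (T ⊗ₖ 1 + 1 ⊗ₖ S : Matrix _ _ ℕ) := by
  rintro ⟨a, b⟩ ⟨l, k⟩
  rw [neighborFinset_boxProd, filter_disjUnion, card_disjUnion]
  simp only [Prod.mk.injEq]
  rw [filter_product (p := fun a => g a = l) (q := fun b => f b = k),
    filter_product (p := fun a => g a = l) (q := fun b => f b = k), card_product, card_product,
    hg, hf]
  simp [filter_singleton, apply_ite card, kroneckerMap_apply, one_apply]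

end PerfectColoring

namespace Matrix

variable {K L R : Type*} [Fintype K] [Fintype L]

theorem kronecker_mulVec_mul [CommSemiring R] (A : Matrix L L R) (B : Matrix K K R)
    (u : L → R) (v : K → R) :
    (A ⊗ₖ B) *ᵥ (fun p => u p.1 * v p.2) = fun p => (A *ᵥ u) p.1 * (B *ᵥ v) p.2 := by
  ext ⟨i, j⟩
  simp only [mulVec, dotProduct, kroneckerMap_apply, Fintype.sum_prod_type, sum_mul_sum]
  exact sum_congr rfl fun _ _ => sum_congr rfl fun _ _ => by ring

theorem kroneckerSum_mulVec_mul_of_eigen [CommSemiring R] [DecidableEq K] [DecidableEq L]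
    {A : Matrix L L R} {B : Matrix K K R} {u : L → R} {v : K → R} {α β : R}
    (hu : A *ᵥ u = α • u) (hv : B *ᵥ v = β • v) :
    (A ⊗ₖ 1 + 1 ⊗ₖ B) *ᵥ (fun p => u p.1 * v p.2) = (α + β) • fun p => u p.1 * v p.2 := by
  ext p
  simp only [add_mulVec, kronecker_mulVec_mul, one_mulVec, hu, hv, Pi.add_apply, Pi.smul_apply,
    smul_eq_mul]
  ring

end Matrix

theorem mul_fst_snd_ne_zero {K L R : Type*} [MulZeroClass R] [NoZeroDivisors R]
    {u : L → R} {v : K → R} (hu : u ≠ 0) (hv : v ≠ 0) : (fun p : L × K => u p.1 * v p.2) ≠ 0 := by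
  obtain ⟨i, hi⟩ := Function.ne_iff.mp hu
  obtain ⟨j, hj⟩ := Function.ne_iff.mp hv
  exact Function.ne_iff.mpr ⟨(i, j), mul_ne_zero hi hj⟩

theorem ZMod.sum_univ_two {M : Type*} [AddCommMonoid M] (f : ZMod 2 → M) : ∑ a, f a = f 0 + f 1 :=
  Fin.sum_univ_two f

theorem adjMatrix_top_zmod_two_mulVec_one (R : Type*) [NonAssocSemiring R] :
    (⊤ : SimpleGraph (ZMod 2)).adjMatrix R *ᵥ (fun _ => 1) = (1 : R) • fun _ => 1 := by
  ext a
  simp only [mulVec, dotProduct, ZMod.sum_univ_two, adjMatrix_apply, top_adj]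
  obtain rfl | rfl : a = 0 ∨ a = 1 := by revert a; decide
  all_goals simp

theorem adjMatrix_top_zmod_two_mulVec_sign (R : Type*) [Ring R] :
    (⊤ : SimpleGraph (ZMod 2)).adjMatrix R *ᵥ (fun a => if a = 0 then 1 else -1)
      = (-1 : R) • fun a => if a = 0 then 1 else -1 := by
  ext a
  simp only [mulVec, dotProduct, ZMod.sum_univ_two, adjMatrix_apply, top_adj]
  obtain rfl | rfl : a = 0 ∨ a = 1 := by revert a; decide
  all_goals simp

theorem natCast_ite_eq_adjMatrix_top_kroneckerSum {K L : Type*} [DecidableEq K] [DecidableEq L]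
    (R : Type*) [Semiring R] (S : K → K → ℕ) :
    (fun p q : L × K => ((if p.1 = q.1 then S p.2 q.2 else if p.2 = q.2 then 1 else 0 : ℕ) : R))
      = ((⊤ : SimpleGraph L).adjMatrix R ⊗ₖ 1 + 1 ⊗ₖ (fun i j => (S i j : R)) :
        Matrix (L × K) (L × K) R) := by
  ext ⟨a, c⟩ ⟨b, d⟩
  by_cases hab : a = b <;> by_cases hcd : c = d <;>
    simp [hab, hcd, one_apply, adjMatrix_apply, kroneckerMap]

/-- From a perfect `k`-coloring `f` of `Q_{n−1}` one gets a perfect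
`2k`-coloring `g(x) = (x_{n−1}, f(x₀,…,x_{n−2}))` of `Qₙ` with quotient matrix
`[[S, Id],[Id, S]]`; each `λ`-eigenvector `v` of `S` gives a `(λ+1)`-eigenvector `(v,v)`
and a `(λ−1)`-eigenvector `(v,−v)` of the new quotient matrix. -/
theorem stmt10 (m : ℕ) {K : Type*} [Fintype K] [DecidableEq K]
    (f : (Fin m → ZMod 2) → K) (S : K → K → ℕ)
    (hperf : IsPerfectColoring (cubeGraph m) f S) :
    IsPerfectColoring (cubeGraph (m + 1))
        (fun x => (x (Fin.last m), f (fun i => x i.castSucc)))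
        (fun p q : ZMod 2 × K =>
          if p.1 = q.1 then S p.2 q.2 else if p.2 = q.2 then 1 else 0) ∧
      ∀ (lam : ℝ) (v : K → ℝ), v ≠ 0 →
        Matrix.mulVec (fun i j => (S i j : ℝ) : Matrix K K ℝ) v = lam • v →
        ((fun p : ZMod 2 × K => v p.2) ≠ 0 ∧
          Matrix.mulVec
            (fun p q => ((if p.1 = q.1 then S p.2 q.2 else if p.2 = q.2 then 1 else 0 : ℕ) : ℝ)
              : Matrix (ZMod 2 × K) (ZMod 2 × K) ℝ)
            (fun p : ZMod 2 × K => v p.2)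
          = (lam + 1) • (fun p : ZMod 2 × K => v p.2)) ∧
        ((fun p : ZMod 2 × K => if p.1 = 0 then v p.2 else -v p.2) ≠ 0 ∧
          Matrix.mulVec
            (fun p q => ((if p.1 = q.1 then S p.2 q.2 else if p.2 = q.2 then 1 else 0 : ℕ) : ℝ)
              : Matrix (ZMod 2 × K) (ZMod 2 × K) ℝ)
            (fun p : ZMod 2 × K => if p.1 = 0 then v p.2 else -v p.2)
          = (lam - 1) • (fun p : ZMod 2 × K => if p.1 = 0 then v p.2 else -v p.2)) := by
  classical
  refine ⟨?_, fun lam v hv hev => ?_⟩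
  · have h := ((isPerfectColoring_id_adjMatrix ⊤).boxProd hperf).comp_iso (cubeGraphSuccIso m)
    have hT := natCast_ite_eq_adjMatrix_top_kroneckerSum (L := ZMod 2) ℕ S
    simp only [Nat.cast_id] at hT
    rwa [← hT] at h
  rw [natCast_ite_eq_adjMatrix_top_kroneckerSum ℝ]
  have hsum := kroneckerSum_mulVec_mul_of_eigen (adjMatrix_top_zmod_two_mulVec_one ℝ) hev
  have hdiff := kroneckerSum_mulVec_mul_of_eigen (adjMatrix_top_zmod_two_mulVec_sign ℝ) hev
  have hsum_ne := mul_fst_snd_ne_zero (u := fun _ : ZMod 2 => (1 : ℝ))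
    (Function.ne_iff.mpr ⟨0, one_ne_zero⟩) hv
  have hdiff_ne := mul_fst_snd_ne_zero (u := fun a : ZMod 2 => if a = 0 then (1 : ℝ) else -1)
    (Function.ne_iff.mpr ⟨0, by simp⟩) hv
  simp only [one_mul, ite_mul, neg_one_mul] at hsum hdiff hsum_ne hdiff_ne
  exact ⟨⟨hsum_ne, by rw [hsum, add_comm]⟩, hdiff_ne, by rw [hdiff, neg_add_eq_sub]⟩
end

section
/- Every Boolean function f : Z₂ⁿ → {0,1} of degree at most 3 (as a real polynomial, equivalently having zero Fourier–Walsh coefficients on all characters of weight greater than 3) has at most 12 essential arguments. In particular, for n > 12 every degree-3 Boolean function on Z₂ⁿ has a nonessential argument. -/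
/-!
Let `g` be `0/1`-valued of Fourier degree at most `d + 1`. For an essential coordinate `i` the
twisted derivative `(g (x + eᵢ) - g x) · (-1)^{xᵢ}` is a nonzero function of degree at most `d`,
and a nonzero function of degree at most `d` is nonzero on at least a `2⁻ᵈ` fraction of the cube
(differentiate along a coordinate of a nonempty character with nonzero coefficient: the degree
drops, the support at most doubles). So every essential coordinate has influence at least `2⁻ᵈ`.
By Parseval the total influence is `4 ∑ₛ |S| ĝ(S)² ≤ 4 (d + 1) Var g ≤ d + 1`, which leaves room
for at most `(d + 1) 2ᵈ` essential coordinates.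
-/

open Finset

namespace BooleanCube

lemma neg_one_pow_val_add {R : Type*} [Ring R] (a b : ZMod 2) :
    (-1 : R) ^ (a + b).val = (-1) ^ a.val * (-1) ^ b.val := by
  rw [ZMod.val_add, ← neg_one_pow_eq_pow_mod_two, pow_add]

variable {ι : Type*}

noncomputable def walsh (S : Finset ι) (x : ι → ZMod 2) : ℝ :=
  ∏ i ∈ S, (-1) ^ (x i).val

lemma walsh_add (S : Finset ι) (x y : ι → ZMod 2) :
    walsh S (x + y) = walsh S x * walsh S y := by
  simp only [walsh, Pi.add_apply, neg_one_pow_val_add, prod_mul_distrib]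

lemma walsh_sq (S : Finset ι) (x : ι → ZMod 2) : walsh S x ^ 2 = 1 := by
  simp only [walsh, ← prod_pow, ← pow_mul, even_two, Even.mul_left, Even.neg_pow, one_pow,
    prod_const_one]

lemma walsh_ne_zero (S : Finset ι) (x : ι → ZMod 2) : walsh S x ≠ 0 := fun h => by
  simpa [h] using walsh_sq S x

section

variable [DecidableEq ι]

lemma walsh_single (S : Finset ι) (i : ι) :
    walsh S (Pi.single i 1) = if i ∈ S then -1 else 1 := by
  simp only [walsh, Pi.single_apply, apply_ite ZMod.val, apply_ite ((-1 : ℝ) ^ ·),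
    ZMod.val_one, ZMod.val_zero, pow_one, pow_zero, prod_ite_eq']

/-- Up to sign, `g (x with xᵢ = 1) - g (x with xᵢ = 0)`; the twist by `walsh {i}` makes its
Fourier expansion that of the formal partial derivative `∂/∂xᵢ`. -/
noncomputable def partialDeriv (i : ι) (g : (ι → ZMod 2) → ℝ) (x : ι → ZMod 2) : ℝ :=
  (g (x + Pi.single i 1) - g x) * walsh {i} x

lemma partialDeriv_ne_zero_iff {i : ι} {g : (ι → ZMod 2) → ℝ} {x : ι → ZMod 2} :
    partialDeriv i g x ≠ 0 ↔ g (x + Pi.single i 1) ≠ g x := by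
  simp [partialDeriv, walsh_ne_zero, sub_eq_zero]

end

variable [Fintype ι]

lemma sum_walsh (z : ι → ZMod 2) :
    ∑ S, walsh S z = if z = 0 then 2 ^ Fintype.card ι else 0 := by
  rw [← powerset_univ]
  simp only [walsh]
  rw [← prod_one_add]
  split_ifs with hz
  · simp [hz, one_add_one_eq_two]
  · obtain ⟨i, hi⟩ := Function.ne_iff.1 hz
    refine prod_eq_zero (mem_univ i) ?_
    have hzi : z i = 1 := (by decide : ∀ a : ZMod 2, a ≠ 0 → a = 1) _ hi
    simp [hzi, ZMod.val_one]

variable [DecidableEq ι]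

noncomputable def fourierCoeff (g : (ι → ZMod 2) → ℝ) (S : Finset ι) : ℝ :=
  ∑ x, g x * walsh S x

lemma fourierCoeff_empty (g : (ι → ZMod 2) → ℝ) : fourierCoeff g ∅ = ∑ x, g x := by
  simp [fourierCoeff, walsh]

lemma sum_fourierCoeff_mul_walsh (g : (ι → ZMod 2) → ℝ) (y : ι → ZMod 2) :
    ∑ S, fourierCoeff g S * walsh S y = 2 ^ Fintype.card ι * g y := by
  calc ∑ S, fourierCoeff g S * walsh S y = ∑ x, g x * ∑ S, walsh S (x + y) := by
        simp only [fourierCoeff, sum_mul, mul_sum, walsh_add, mul_assoc]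
        exact sum_comm
    _ = ∑ x, g x * if x = y then 2 ^ Fintype.card ι else 0 := by
        simp only [sum_walsh, add_eq_zero_iff_eq_neg, ZModModule.neg_eq_self]
    _ = 2 ^ Fintype.card ι * g y := by simp [mul_comm]

lemma sum_fourierCoeff_sq (g : (ι → ZMod 2) → ℝ) :
    ∑ S, fourierCoeff g S ^ 2 = 2 ^ Fintype.card ι * ∑ x, g x ^ 2 := by
  calc ∑ S, fourierCoeff g S ^ 2 = ∑ S, ∑ x, g x * (fourierCoeff g S * walsh S x) := by
        refine sum_congr rfl fun S _ => ?_
        rw [sq]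
        nth_rw 2 [fourierCoeff]
        simp only [mul_sum]
        exact sum_congr rfl fun x _ => by ring
    _ = 2 ^ Fintype.card ι * ∑ x, g x ^ 2 := by
        simp only [sum_comm (γ := Finset ι), ← mul_sum, sum_fourierCoeff_mul_walsh]
        rw [mul_sum]
        exact sum_congr rfl fun x _ => by ring

lemma fourierCoeff_comp_add (g : (ι → ZMod 2) → ℝ) (e : ι → ZMod 2) (S : Finset ι) :
    fourierCoeff (fun x => g (x + e)) S = walsh S e * fourierCoeff g S := by
  rw [fourierCoeff, fourierCoeff, mul_sum]
  refine Fintype.sum_equiv (Equiv.addRight e) _ _ fun x => ?_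
  simp only [Equiv.coe_addRight, walsh_add]
  linear_combination (-(g (x + e) * walsh S x)) * walsh_sq S e

def FourierDegreeLE (g : (ι → ZMod 2) → ℝ) (d : ℕ) : Prop :=
  ∀ S : Finset ι, d < #S → fourierCoeff g S = 0

lemma FourierDegreeLE.apply_eq_apply {g : (ι → ZMod 2) → ℝ} (hg : FourierDegreeLE g 0)
    (x y : ι → ZMod 2) : g x = g y := by
  have hconst : ∀ y, 2 ^ Fintype.card ι * g y = fourierCoeff g ∅ := fun y => by
    rw [← sum_fourierCoeff_mul_walsh, sum_eq_single ∅ (fun S _ hS => by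
      rw [hg S (card_pos.2 (nonempty_iff_ne_empty.2 hS)), zero_mul]) (by simp)]
    simp [walsh]
  exact mul_left_cancel₀ (by positivity) ((hconst x).trans (hconst y).symm)

lemma FourierDegreeLE.card_support_eq {g : (ι → ZMod 2) → ℝ} (hg : FourierDegreeLE g 0)
    (hne : ∃ x, g x ≠ 0) : #{x | g x ≠ 0} = 2 ^ Fintype.card ι := by
  obtain ⟨x, hx⟩ := hne
  rw [filter_true_of_mem fun y _ => hg.apply_eq_apply x y ▸ hx, card_univ]
  simp

lemma card_sensitive_le (g : (ι → ZMod 2) → ℝ) (e : ι → ZMod 2) :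
    #{x | g (x + e) ≠ g x} ≤ 2 * #{x | g x ≠ 0} := by
  have hshift : #{x | g (x + e) ≠ 0} = #{x | g x ≠ 0} :=
    card_equiv (Equiv.addRight e) (by simp)
  calc #{x | g (x + e) ≠ g x} ≤ #{x | g (x + e) ≠ 0 ∨ g x ≠ 0} :=
        card_le_card <| monotone_filter_right _ fun x _ hx => by
          by_contra! h; exact hx (h.1.trans h.2.symm)
    _ ≤ #{x | g (x + e) ≠ 0} + #{x | g x ≠ 0} := by rw [filter_or]; exact card_union_le ..
    _ = 2 * #{x | g x ≠ 0} := by rw [hshift, two_mul]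

lemma walsh_eq_prod_univ (S : Finset ι) (x : ι → ZMod 2) :
    walsh S x = ∏ i, if i ∈ S then (-1) ^ (x i).val else 1 := by
  rw [prod_ite_mem, univ_inter, walsh]

lemma walsh_mul_walsh (S T : Finset ι) (x : ι → ZMod 2) :
    walsh S x * walsh T x = walsh (symmDiff S T) x := by
  simp only [walsh_eq_prod_univ, ← prod_mul_distrib, mem_symmDiff]
  refine prod_congr rfl fun i _ => ?_
  by_cases hS : i ∈ S <;> by_cases hT : i ∈ T <;>
    simp [hS, hT, ← pow_add, ← two_mul, pow_mul]

lemma fourierCoeff_partialDeriv (i : ι) (g : (ι → ZMod 2) → ℝ) (U : Finset ι) :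
    fourierCoeff (partialDeriv i g) U =
      if i ∈ U then 0 else -2 * fourierCoeff g (insert i U) := by
  have hsplit : fourierCoeff (partialDeriv i g) U
      = fourierCoeff (fun x => g (x + Pi.single i 1)) (symmDiff U {i})
        - fourierCoeff g (symmDiff U {i}) := by
    simp only [fourierCoeff, partialDeriv, ← sum_sub_distrib, mul_assoc, walsh_mul_walsh,
      symmDiff_comm {i} U, sub_mul]
  rw [hsplit, fourierCoeff_comp_add, walsh_single]
  by_cases hi : i ∈ U
  · simp [hi, mem_symmDiff]
  · have : symmDiff U {i} = insert i U := by
      rw [(disjoint_singleton_right.2 hi).symmDiff_eq_sup, sup_eq_union, union_comm,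
        ← insert_eq]
    simp [hi, this]
    ring

lemma fourierDegreeLE_partialDeriv {g : (ι → ZMod 2) → ℝ} {d : ℕ}
    (hg : FourierDegreeLE g (d + 1)) (i : ι) : FourierDegreeLE (partialDeriv i g) d :=
    fun U hU => by
  rw [fourierCoeff_partialDeriv]
  split_ifs with hi
  · rfl
  · rw [hg _ (by rw [card_insert_of_notMem hi]; omega), mul_zero]

theorem FourierDegreeLE.two_pow_card_le {g : (ι → ZMod 2) → ℝ} {d : ℕ}
    (hg : FourierDegreeLE g d) (hne : ∃ x, g x ≠ 0) :
    2 ^ Fintype.card ι ≤ 2 ^ d * #{x | g x ≠ 0} := by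
  induction d generalizing g with
  | zero => rw [hg.card_support_eq hne, pow_zero, one_mul]
  | succ d ih =>
    by_cases h0 : FourierDegreeLE g 0
    · rw [h0.card_support_eq hne]
      exact Nat.le_mul_of_pos_left _ (by positivity)
    obtain ⟨T, hT, hgT⟩ : ∃ T : Finset ι, 0 < #T ∧ fourierCoeff g T ≠ 0 := by
      simpa [FourierDegreeLE] using h0
    obtain ⟨i, hi⟩ := card_pos.1 hT
    have hne' : ∃ x, partialDeriv i g x ≠ 0 := by
      by_contra! h
      have := fourierCoeff_partialDeriv i g (T.erase i)
      simp [fourierCoeff, h, insert_erase hi] at this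
      exact hgT this
    calc 2 ^ Fintype.card ι ≤ 2 ^ d * #{x | partialDeriv i g x ≠ 0} :=
          ih (fourierDegreeLE_partialDeriv hg i) hne'
      _ ≤ 2 ^ d * (2 * #{x | g x ≠ 0}) := by
        simp only [partialDeriv_ne_zero_iff]
        gcongr
        exact card_sensitive_le g _
      _ = 2 ^ (d + 1) * #{x | g x ≠ 0} := by ring

theorem two_pow_card_le_card_sensitive {g : (ι → ZMod 2) → ℝ} {d : ℕ}
    (hg : FourierDegreeLE g (d + 1)) {i : ι} (hi : ∃ x, g (x + Pi.single i 1) ≠ g x) :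
    2 ^ Fintype.card ι ≤ 2 ^ d * #{x | g (x + Pi.single i 1) ≠ g x} := by
  simpa only [partialDeriv_ne_zero_iff] using
    (fourierDegreeLE_partialDeriv hg i).two_pow_card_le
      (hi.imp fun _ => partialDeriv_ne_zero_iff.2)

lemma sum_partialDeriv_sq (i : ι) (g : (ι → ZMod 2) → ℝ) :
    2 ^ Fintype.card ι * ∑ x, partialDeriv i g x ^ 2
      = 4 * ∑ S with i ∈ S, fourierCoeff g S ^ 2 := by
  rw [← sum_fourierCoeff_sq, mul_sum]
  simp only [fourierCoeff_partialDeriv]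
  calc ∑ U, (if i ∈ U then 0 else -2 * fourierCoeff g (insert i U)) ^ 2
      = ∑ U with i ∉ U, 4 * fourierCoeff g (insert i U) ^ 2 := by
        rw [sum_filter]
        exact sum_congr rfl fun U _ => by split_ifs <;> ring
    _ = ∑ S with i ∈ S, 4 * fourierCoeff g S ^ 2 :=
        sum_nbij' (insert i) (·.erase i) (by simp) (by simp) (by simp +contextual)
          (by simp +contextual) (by simp)

lemma sum_sum_partialDeriv_sq (g : (ι → ZMod 2) → ℝ) :
    2 ^ Fintype.card ι * ∑ i, ∑ x, partialDeriv i g x ^ 2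
      = 4 * ∑ S, #S * fourierCoeff g S ^ 2 := by
  rw [mul_sum]
  simp only [sum_partialDeriv_sq, sum_filter]
  rw [← mul_sum, sum_comm]
  refine congrArg _ (sum_congr rfl fun S _ => ?_)
  rw [sum_ite_mem, univ_inter, sum_const, nsmul_eq_mul]

lemma sum_partialDeriv_sq_eq_card {g : (ι → ZMod 2) → ℝ} (hb : ∀ x, g x = 0 ∨ g x = 1)
    (i : ι) : ∑ x, partialDeriv i g x ^ 2 = #{x | g (x + Pi.single i 1) ≠ g x} := by
  have hsq : ∀ x, partialDeriv i g x ^ 2 = if g (x + Pi.single i 1) ≠ g x then 1 else 0 := by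
    intro x
    rw [partialDeriv, mul_pow, walsh_sq, mul_one]
    rcases hb (x + Pi.single i 1) with h₁ | h₁ <;> rcases hb x with h₂ | h₂ <;>
      simp [h₁, h₂]
  simp only [hsq, sum_boole]

lemma FourierDegreeLE.sum_card_mul_sq_le {g : (ι → ZMod 2) → ℝ} {d : ℕ}
    (hg : FourierDegreeLE g d) :
    ∑ S, #S * fourierCoeff g S ^ 2
      ≤ d * (∑ S, fourierCoeff g S ^ 2 - fourierCoeff g ∅ ^ 2) := by
  rw [← sum_erase_eq_sub (mem_univ ∅), ← sum_erase univ (a := ∅) (by simp), mul_sum]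
  refine sum_le_sum fun S _ => ?_
  rcases le_or_gt #S d with h | h
  · gcongr
  · simp [hg S h]

lemma sum_fourierCoeff_sq_sub_le {g : (ι → ZMod 2) → ℝ} (hb : ∀ x, g x = 0 ∨ g x = 1) :
    4 * (∑ S, fourierCoeff g S ^ 2 - fourierCoeff g ∅ ^ 2) ≤ (2 ^ Fintype.card ι) ^ 2 := by
  have hsq : ∀ x, g x ^ 2 = g x := fun x => by rcases hb x with h | h <;> simp [h]
  rw [sum_fourierCoeff_sq, fourierCoeff_empty]
  simp only [hsq]
  nlinarith [sq_nonneg ((2 : ℝ) ^ Fintype.card ι - 2 * ∑ x, g x)]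

theorem sum_card_sensitive_le {g : (ι → ZMod 2) → ℝ} {d : ℕ}
    (hb : ∀ x, g x = 0 ∨ g x = 1) (hg : FourierDegreeLE g d) :
    ∑ i, #{x | g (x + Pi.single i 1) ≠ g x} ≤ d * 2 ^ Fintype.card ι := by
  have h : (2 : ℝ) ^ Fintype.card ι * ∑ i, (#{x | g (x + Pi.single i 1) ≠ g x} : ℝ)
      ≤ 2 ^ Fintype.card ι * (d * 2 ^ Fintype.card ι) :=
    calc (2 : ℝ) ^ Fintype.card ι * ∑ i, (#{x | g (x + Pi.single i 1) ≠ g x} : ℝ)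
        = 4 * ∑ S, #S * fourierCoeff g S ^ 2 := by
          simp only [← sum_partialDeriv_sq_eq_card hb, sum_sum_partialDeriv_sq]
      _ ≤ d * (4 * (∑ S, fourierCoeff g S ^ 2 - fourierCoeff g ∅ ^ 2)) := by
          linarith [hg.sum_card_mul_sq_le]
      _ ≤ d * (2 ^ Fintype.card ι) ^ 2 := by gcongr; exact sum_fourierCoeff_sq_sub_le hb
      _ = 2 ^ Fintype.card ι * (d * 2 ^ Fintype.card ι) := by ring
  exact_mod_cast le_of_mul_le_mul_left h (by positivity)

theorem card_essential_le {g : (ι → ZMod 2) → ℝ} {d : ℕ}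
    (hb : ∀ x, g x = 0 ∨ g x = 1) (hg : FourierDegreeLE g (d + 1)) :
    #{i | ∃ x, g (x + Pi.single i 1) ≠ g x} ≤ (d + 1) * 2 ^ d := by
  refine Nat.le_of_mul_le_mul_right ?_ (by positivity : 0 < 2 ^ Fintype.card ι)
  calc #{i | ∃ x, g (x + Pi.single i 1) ≠ g x} * 2 ^ Fintype.card ι
      = ∑ i with ∃ x, g (x + Pi.single i 1) ≠ g x, 2 ^ Fintype.card ι := by
        rw [sum_const, smul_eq_mul]
    _ ≤ ∑ i with ∃ x, g (x + Pi.single i 1) ≠ g x,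
          2 ^ d * #{x | g (x + Pi.single i 1) ≠ g x} :=
        sum_le_sum fun i hi => two_pow_card_le_card_sensitive hg (mem_filter.1 hi).2
    _ ≤ ∑ i, 2 ^ d * #{x | g (x + Pi.single i 1) ≠ g x} :=
        sum_le_sum_of_subset (filter_subset ..)
    _ = 2 ^ d * ∑ i, #{x | g (x + Pi.single i 1) ≠ g x} := (mul_sum ..).symm
    _ ≤ 2 ^ d * ((d + 1) * 2 ^ Fintype.card ι) := by gcongr; exact sum_card_sensitive_le hb hg
    _ = (d + 1) * 2 ^ d * 2 ^ Fintype.card ι := by ring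

end BooleanCube

/-- Nisan–Szegedy for `d = 3`: a Boolean function of degree at most 3
(all Fourier–Walsh coefficients on characters of weight `> 3` vanish) has at most
`3·2² = 12` essential arguments; in particular, for `n > 12` it has a nonessential
argument. -/
theorem stmt14 (n : ℕ) (f : (Fin n → ZMod 2) → ZMod 2)
    (hdeg : ∀ s : Finset (Fin n), 3 < s.card →
      ∑ x : Fin n → ZMod 2, ((f x).val : ℝ) * (-1) ^ (∑ i ∈ s, (x i).val) = 0) :
    {i : Fin n | ∃ x, f (x + Pi.single i 1) ≠ f x}.ncard ≤ 12 ∧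
      (12 < n → ∃ i : Fin n, ∀ x, f (x + Pi.single i 1) = f x) := by
  set g : (Fin n → ZMod 2) → ℝ := fun x => (f x).val
  have hb : ∀ x, g x = 0 ∨ g x = 1 := fun x => by
    show ((f x).val : ℝ) = 0 ∨ ((f x).val : ℝ) = 1
    exact_mod_cast Nat.le_one_iff_eq_zero_or_eq_one.1 (Nat.lt_succ_iff.1 (ZMod.val_lt (f x)))
  have hg : BooleanCube.FourierDegreeLE g (2 + 1) := fun S hS => by
    simpa only [BooleanCube.fourierCoeff, BooleanCube.walsh, prod_pow_eq_pow_sum] using hdeg S hS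
  have hgf : ∀ x y, g x = g y ↔ f x = f y := fun x y =>
    Nat.cast_inj.trans (ZMod.val_injective 2).eq_iff
  have hcard : #{i | ∃ x, f (x + Pi.single i 1) ≠ f x} ≤ 12 := by
    simpa only [ne_eq, hgf, Nat.reduceAdd, Nat.reducePow, Nat.reduceMul] using
      BooleanCube.card_essential_le hb hg
  refine ⟨by rwa [Set.ncard_eq_toFinset_card', Set.toFinset_ofPred], fun hn => ?_⟩
  by_contra! h
  rw [filter_true_of_mem fun i _ => h i, card_univ, Fintype.card_fin] at hcard
  omega
end
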